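/- arXiv:2307.05703 — 3 statements merged into one kernel-verified Lean document; each statement's English description precedes it below -/
import Mathlib

section
/- Let m, ξ : ℝ → ℝ be differentiable functions with m(t) > 0 for all t, and let H ∈ ℝ be a constant. Suppose that for all t the pair satisfies the equations ṁ(t) = m(t)·ξ(t) and ξ̇(t) = (1/m(t))·(H − m(t)·ξ(t)²). Then m is twice differentiable and m̈(t) = H for all t; i.e., the total mass evolves with constant acceleration equal to H. -/
/-- Along geodesics of the conical unbalanced optimal transport metric, the total mass
`m` (with logarithmic derivative `ξ`) evolves with constant acceleration equal to the
Hamiltonian `H`: if `ṁ = m ξ` and `ξ̇ = (1/m)(H - m ξ²)`, then `m̈ = H`. -/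
theorem mass_constant_acceleration
    (m ξ : ℝ → ℝ) (H : ℝ)
    (hm : Differentiable ℝ m) (hξ : Differentiable ℝ ξ)
    (hmpos : ∀ t, 0 < m t)
    (hm' : ∀ t, deriv m t = m t * ξ t)
    (hξ' : ∀ t, deriv ξ t = (1 / m t) * (H - m t * (ξ t) ^ 2)) :
    Differentiable ℝ (deriv m) ∧ ∀ t, deriv (deriv m) t = H := by
  have heq : deriv m = fun t => m t * ξ t := funext hm'
  have hdiff : Differentiable ℝ (fun t => m t * ξ t) := hm.mul hξ
  refine ⟨heq ▸ hdiff, fun t => ?_⟩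
  rw [heq, deriv_fun_mul (hm t) (hξ t), hm' t, hξ' t]
  field_simp [(hmpos t).ne']
  ring
end

section
/- Let U and V be positive definite symmetric n×n real matrices, and define T = U^{1/2} (U^{1/2} V U^{1/2})^{-1/2} U^{1/2}, where M^{1/2} denotes the unique positive definite square root of a positive definite matrix M. Then T is symmetric positive definite and T V T = U. -/
open Matrix

/-- McCann's optimal map between Gaussian covariances: with `A = U^{1/2}` the positive
definite square root of `U` and `B = (A V A)^{1/2} = (U^{1/2} V U^{1/2})^{1/2}`, the matrix
`T = A B⁻¹ A = U^{1/2} (U^{1/2} V U^{1/2})^{-1/2} U^{1/2}` is symmetric positive definite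
and satisfies `T V T = U`. -/
theorem mccann_map_posdef_and_pushforward
    {n : ℕ} (U V : Matrix (Fin n) (Fin n) ℝ) (hU : U.PosDef) (hV : V.PosDef)
    (A : Matrix (Fin n) (Fin n) ℝ) (hA : A.PosDef) (hA2 : A * A = U)
    (B : Matrix (Fin n) (Fin n) ℝ) (hB : B.PosDef) (hB2 : B * B = A * V * A)
    (T : Matrix (Fin n) (Fin n) ℝ) (hT : T = A * B⁻¹ * A) :
    T.PosDef ∧ Tᵀ = T ∧ T * V * T = U := by
  have hBi : (B⁻¹).PosDef := hB.inv
  have hAT : Aᵀ = A := hA.isHermitian.eq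
  have hTherm : T.IsHermitian := by
    rw [hT]
    unfold Matrix.IsHermitian
    simp only [conjTranspose_mul]
    rw [hA.isHermitian.eq, hBi.isHermitian.eq, Matrix.mul_assoc]
  have hTpd : T.PosDef := by
    refine Matrix.PosDef.of_dotProduct_mulVec_pos hTherm fun x hx => ?_
    have hdet : IsUnit A.det := (Matrix.isUnit_iff_isUnit_det A).mp hA.isUnit
    have hAx : A *ᵥ x ≠ 0 := by
      intro h
      apply hx
      have := congrArg (fun y => A⁻¹ *ᵥ y) h
      simpa [Matrix.mulVec_mulVec, Matrix.nonsing_inv_mul A hdet] using this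
    have hpos := hBi.dotProduct_mulVec_pos hAx
    have key : star x ⬝ᵥ T *ᵥ x = star (A *ᵥ x) ⬝ᵥ B⁻¹ *ᵥ (A *ᵥ x) := by
      have hvm : x ᵥ* A = A *ᵥ x := by
        rw [← Matrix.mulVec_transpose, hAT]
      rw [hT, Matrix.mul_assoc, ← Matrix.mulVec_mulVec, ← Matrix.mulVec_mulVec,
        Matrix.dotProduct_mulVec]
      simp only [star_trivial] at *
      rw [hvm]
    rw [key]
    exact hpos
  refine ⟨hTpd, ?_, ?_⟩
  · have := hTherm.eq
    simpa using this
  · have hBB : B⁻¹ * B = 1 := Matrix.nonsing_inv_mul B ((Matrix.isUnit_iff_isUnit_det B).mp hB.isUnit)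
    have hBB' : B * B⁻¹ = 1 := Matrix.mul_nonsing_inv B ((Matrix.isUnit_iff_isUnit_det B).mp hB.isUnit)
    rw [hT]
    calc A * B⁻¹ * A * V * (A * B⁻¹ * A)
        = A * B⁻¹ * (A * V * A) * B⁻¹ * A := by noncomm_ring
      _ = A * B⁻¹ * (B * B) * B⁻¹ * A := by rw [hB2]
      _ = A * (B⁻¹ * B) * (B * B⁻¹) * A := by noncomm_ring
      _ = A * A := by rw [hBB, hBB']; noncomm_ring
      _ = U := hA2
end

section
/- Let U and V be positive definite symmetric n×n real matrices, and let T = U^{1/2} (U^{1/2} V U^{1/2})^{-1/2} U^{1/2}, where M^{1/2} denotes the unique positive definite square root. Define W(t) = [(1−t)·Id + t·T] V [(1−t)·Id + t·T] for t ∈ [0,1]. Then W(t) is symmetric positive definite for every t ∈ [0,1], W(0) = V, and W(1) = U. -/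
open Matrix

lemma posSemidef_smul_real {n : ℕ} {M : Matrix (Fin n) (Fin n) ℝ} (hM : M.PosSemidef)
    {c : ℝ} (hc : 0 ≤ c) : (c • M).PosSemidef := by
  refine posSemidef_iff_dotProduct_mulVec.mpr ⟨?_, fun x => ?_⟩
  · unfold Matrix.IsHermitian
    rw [conjTranspose_smul, hM.1.eq]
    simp
  · rw [smul_mulVec, dotProduct_smul, smul_eq_mul]
    exact mul_nonneg hc (hM.dotProduct_mulVec_nonneg x)

lemma posDef_conj_real {n : ℕ} {V M : Matrix (Fin n) (Fin n) ℝ} (hV : V.PosDef)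
    (hM : IsUnit M) : (Mᵀ * V * M).PosDef := by
  refine posDef_iff_dotProduct_mulVec.mpr ⟨?_, fun x hx => ?_⟩
  · have := isHermitian_conjTranspose_mul_mul M hV.1
    simpa [conjTranspose_eq_transpose_of_trivial] using this
  · have hMx : M *ᵥ x ≠ 0 := fun h => hx (mulVec_injective_iff_isUnit.2 hM (by simpa using h))
    rw [← conjTranspose_eq_transpose_of_trivial M]
    simpa only [star_mulVec, dotProduct_mulVec, vecMul_vecMul] using hV.dotProduct_mulVec_pos hMx

/-- McCann's geodesic of Gaussian covariances: with
`T = U^{1/2} (U^{1/2} V U^{1/2})^{-1/2} U^{1/2}` (expressed via the positive definite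
square roots `A = U^{1/2}` and `B = (U^{1/2} V U^{1/2})^{1/2}`), the path
`W(t) = [(1−t)·Id + t·T] V [(1−t)·Id + t·T]` consists of symmetric positive definite
matrices for `t ∈ [0,1]`, with `W(0) = V` and `W(1) = U`. -/
theorem mccann_geodesic_interpolation
    {n : ℕ} (U V : Matrix (Fin n) (Fin n) ℝ) (hU : U.PosDef) (hV : V.PosDef)
    (A : Matrix (Fin n) (Fin n) ℝ) (hA : A.PosDef) (hA2 : A * A = U)
    (B : Matrix (Fin n) (Fin n) ℝ) (hB : B.PosDef) (hB2 : B * B = A * V * A)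
    (T : Matrix (Fin n) (Fin n) ℝ) (hT : T = A * B⁻¹ * A)
    (W : ℝ → Matrix (Fin n) (Fin n) ℝ)
    (hW : ∀ t : ℝ, W t = ((1 - t) • (1 : Matrix (Fin n) (Fin n) ℝ) + t • T) * V *
      ((1 - t) • (1 : Matrix (Fin n) (Fin n) ℝ) + t • T)) :
    (∀ t ∈ Set.Icc (0 : ℝ) 1, (W t).PosDef ∧ (W t)ᵀ = W t) ∧ W 0 = V ∧ W 1 = U := by
  have hAsym : Aᵀ = A := by
    simpa [conjTranspose_eq_transpose_of_trivial] using hA.1.eq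
  have hBsym : Bᵀ = B := by
    simpa [conjTranspose_eq_transpose_of_trivial] using hB.1.eq
  have hBinv : B⁻¹.PosDef := hB.inv
  have hBinvsym : (B⁻¹)ᵀ = B⁻¹ := by
    simpa [conjTranspose_eq_transpose_of_trivial] using hBinv.1.eq
  -- T is positive definite
  have hAunit : IsUnit A := hA.isUnit
  have hTpd : T.PosDef := by
    rw [hT, ← hAsym]
    nth_rewrite 2 [hAsym]
    exact posDef_conj_real hBinv hAunit
  have hTsym : Tᵀ = T := by
    rw [hT]
    simp [Matrix.transpose_mul, hAsym, hBinvsym, Matrix.mul_assoc]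
  -- the interpolation matrix is positive definite for t ∈ [0,1]
  have hM : ∀ t ∈ Set.Icc (0 : ℝ) 1,
      ((1 - t) • (1 : Matrix (Fin n) (Fin n) ℝ) + t • T).PosDef := by
    rintro t ⟨ht0, ht1⟩
    rcases eq_or_lt_of_le ht1 with h1 | h1
    · subst h1
      simpa using hTpd
    · have h1' : (0 : ℝ) < 1 - t := by linarith
      have hleft : ((1 - t) • (1 : Matrix (Fin n) (Fin n) ℝ)).PosDef := by
        refine posDef_iff_dotProduct_mulVec.mpr ⟨?_, fun x hx => ?_⟩
        · unfold Matrix.IsHermitian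
          rw [conjTranspose_smul]
          simp
        · rw [smul_mulVec, dotProduct_smul, smul_eq_mul, one_mulVec]
          have := (Matrix.PosDef.one (n := Fin n) (R := ℝ)).dotProduct_mulVec_pos hx
          rw [one_mulVec] at this
          exact mul_pos h1' this
      exact hleft.add_posSemidef (posSemidef_smul_real hTpd.posSemidef ht0)
  constructor
  · rintro t ht
    set M := (1 - t) • (1 : Matrix (Fin n) (Fin n) ℝ) + t • T with hMdef
    have hMsym : Mᵀ = M := by
      rw [hMdef]
      simp [transpose_add, transpose_smul, hTsym]
    have hMpd := hM t ht
    have hWpd : (W t).PosDef := by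
      rw [hW t, show ((1 - t) • (1 : Matrix (Fin n) (Fin n) ℝ) + t • T) = M from hMdef.symm,
        ← hMsym]
      nth_rewrite 2 [hMsym]
      exact posDef_conj_real hV hMpd.isUnit
    refine ⟨hWpd, ?_⟩
    simpa [conjTranspose_eq_transpose_of_trivial] using hWpd.1.eq
  constructor
  · rw [hW 0]; simp
  · rw [hW 1]
    have hBunit : IsUnit B := hB.isUnit
    have hVsym : T * V * T = U := by
      rw [hT]
      have : A * B⁻¹ * A * V * A = A * B⁻¹ * (B * B) := by
        rw [hB2]; noncomm_ring
      calc A * B⁻¹ * A * V * (A * B⁻¹ * A)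
          = (A * B⁻¹ * A * V * A) * B⁻¹ * A := by noncomm_ring
        _ = (A * B⁻¹ * (B * B)) * B⁻¹ * A := by rw [this]
        _ = A * (B⁻¹ * B) * (B * B⁻¹) * A := by noncomm_ring
        _ = A * A := by
            rw [Matrix.nonsing_inv_mul _ (Matrix.isUnit_iff_isUnit_det _ |>.1 hBunit),
              Matrix.mul_nonsing_inv _ (Matrix.isUnit_iff_isUnit_det _ |>.1 hBunit)]
            simp
        _ = U := hA2
    simpa using hVsym
end
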